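/- (Suitability of a test operator.) Let L be a Hermitian operator on H, let λ_max(L) be its largest eigenvalue, and let 1 ≤ r ≤ min(d_A, d_B). Then f_r(L) = λ_max(L) if and only if the eigenspace of L for the eigenvalue λ_max(L) contains a nonzero vector of Schmidt rank at most r. -/

import Mathlib

/-!
For a unit vector `ψ`, `⟨ψ, L ψ⟩ ≤ λ_max` because `λ_max • 1 - L` is positive semidefinite, and
equality holds exactly when `(λ_max • 1 - L) ψ = 0`, i.e. when `ψ` is a `λ_max`-eigenvector.
Normalising an eigenvector of Schmidt rank at most `r` therefore attains the bound `f_r(L) ≤ λ_max`.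
Conversely, the supremum defining `f_r(L)` is attained: `ψ` has Schmidt rank at most `r` iff its
coefficient matrix has rank at most `r`, a closed condition since rank is lower semicontinuous,
so the unit vectors of Schmidt rank at most `r` form a compact set. A maximiser with value
`λ_max` is then the required eigenvector.
-/

open scoped ComplexOrder

noncomputable section

namespace SNpaper

/-- Elementary tensor `x ⊗ y` of vectors, as a vector on the product index set. -/
def tensorVec {dA dB : ℕ} (x : Fin dA → ℂ) (y : Fin dB → ℂ) : Fin dA × Fin dB → ℂ :=
  fun p => x p.1 * y p.2

/-- `ψ` has Schmidt rank at most `r`. -/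
def SchmidtRankLE {dA dB : ℕ} (r : ℕ) (ψ : Fin dA × Fin dB → ℂ) : Prop :=
  ∃ (x : Fin r → Fin dA → ℂ) (y : Fin r → Fin dB → ℂ),
    ψ = ∑ k, tensorVec (x k) (y k)

/-- The expectation value `⟨ψ, L ψ⟩`. -/
def expVal {dA dB : ℕ} (L : Matrix (Fin dA × Fin dB) (Fin dA × Fin dB) ℂ)
    (ψ : Fin dA × Fin dB → ℂ) : ℂ :=
  dotProduct (star ψ) (L.mulVec ψ)

/-- `ψ` is a unit vector. -/
def IsUnitVec {dA dB : ℕ} (ψ : Fin dA × Fin dB → ℂ) : Prop :=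
  dotProduct (star ψ) ψ = 1

/-- `f_r(L)`: the maximal expectation value of `L` on unit vectors of Schmidt rank at most `r`. -/
def fr {dA dB : ℕ} (r : ℕ) (L : Matrix (Fin dA × Fin dB) (Fin dA × Fin dB) ℂ) : ℝ :=
  sSup { t | ∃ ψ, IsUnitVec ψ ∧ SchmidtRankLE r ψ ∧ (expVal L ψ).re = t }

/-- The rank-one projector `|ψ⟩⟨ψ|` as a matrix. -/
def projOp {n : Type*} (ψ : n → ℂ) : Matrix n n ℂ :=
  Matrix.vecMulVec ψ (star ψ)

/-- `S_r`: states of Schmidt number at most `r` (finite convex combinations of projectors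
onto unit vectors of Schmidt rank at most `r`). -/
def SNle (dA dB r : ℕ) : Set (Matrix (Fin dA × Fin dB) (Fin dA × Fin dB) ℂ) :=
  { σ | ∃ (N : ℕ) (p : Fin N → ℝ) (ψ : Fin N → (Fin dA × Fin dB → ℂ)),
      (∀ i, 0 ≤ p i) ∧ (∑ i, p i = 1) ∧
      (∀ i, IsUnitVec (ψ i)) ∧ (∀ i, SchmidtRankLE r (ψ i)) ∧
      σ = ∑ i, (p i : ℂ) • projOp (ψ i) }

/-- An orthonormal family of vectors. -/
def ONFam {n m : ℕ} (e : Fin m → Fin n → ℂ) : Prop :=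
  ∀ k l, dotProduct (star (e k)) (e l) = if k = l then 1 else 0

theorem _root_.Matrix.exists_eq_mul_of_rank_le {K m n : Type*} [Field K] [Fintype n]
    {A : Matrix m n K} {r : ℕ} (h : A.rank ≤ r) :
    ∃ (X : Matrix m (Fin r) K) (Y : Matrix (Fin r) n K), A = X * Y := by
  set W := Submodule.span K (Set.range A.col)
  have : FiniteDimensional K W := FiniteDimensional.span_of_finite K (Set.finite_range _)
  have hk : Module.finrank K W ≤ r := A.rank_eq_finrank_span_cols ▸ h
  let b := Module.finBasis K W
  let col : n → W := fun j => ⟨A.col j, Submodule.subset_span ⟨j, rfl⟩⟩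
  -- `X` holds a basis of the column space and `Y` the coordinates of the columns in it,
  -- both padded with zeros from `finrank K W` up to `r`.
  refine ⟨Matrix.of fun i => Function.extend (Fin.castLE hk) (fun l => (b l : m → K) i) 0,
    Matrix.of (Function.extend (Fin.castLE hk) (fun l j => b.repr (col j) l) 0), ?_⟩
  ext i j
  have hcol : A i j = ∑ l, b.repr (col j) l * (b l : m → K) i := by
    have := congr_arg (fun w : W => (w : m → K) i) (b.sum_repr (col j))
    simp only [Submodule.coe_sum, Submodule.coe_smul, Finset.sum_apply, Pi.smul_apply,
      smul_eq_mul] at this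
    exact this.symm
  rw [hcol, Matrix.mul_apply]
  refine Fintype.sum_of_injective (Fin.castLE hk) (Fin.castLE_injective hk) _ _
    (fun l hl => ?_) (fun l => ?_)
  · simp [Function.extend_apply' _ _ _ hl]
  · simp [(Fin.castLE_injective hk).extend_apply, mul_comm]

theorem _root_.Matrix.isClosed_setOf_rank_le {𝕜 m n : Type*} [NontriviallyNormedField 𝕜]
    [CompleteSpace 𝕜] [Fintype m] [Fintype n] (r : ℕ) :
    IsClosed {A : Matrix m n 𝕜 | A.rank ≤ r} := by
  classical
  let Φ : Matrix m n 𝕜 →ₗ[𝕜] (n → 𝕜) →L[𝕜] (m → 𝕜) :=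
    (Matrix.toLin'.trans LinearMap.toContinuousLinearMap).toLinearMap
  have hrank (A : Matrix m n 𝕜) : (Φ A : (n → 𝕜) →ₗ[𝕜] (m → 𝕜)).rank = A.rank := by
    rw [Matrix.rank, ← Matrix.toLin'_apply', LinearMap.rank, Module.finrank_eq_rank]
    rfl
  have hopen := (isOpen_setOfPred_nat_le_rank (E := n → 𝕜) (F := m → 𝕜) (r + 1)).preimage
    Φ.continuous_of_finiteDimensional
  refine isOpen_compl_iff.mp (by convert hopen using 1; ext A; simp [hrank])

section

open Matrix

variable {𝕜 n : Type*} [RCLike 𝕜] [Fintype n] [DecidableEq n] {L : Matrix n n 𝕜} {c : ℝ}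

theorem _root_.Matrix.IsHermitian.posSemidef_algebraMap_sub (hL : L.IsHermitian)
    (hc : ∀ i, hL.eigenvalues i ≤ c) : (algebraMap ℝ (Matrix n n 𝕜) c - L).PosSemidef := by
  open scoped MatrixOrder in
  refine Matrix.le_iff.mp (le_algebraMap_of_spectrum_le ?_ hL.isSelfAdjoint)
  rw [hL.spectrum_real_eq_range_eigenvalues]
  rintro _ ⟨i, rfl⟩
  exact hc i

theorem _root_.Matrix.algebraMap_sub_mulVec (v : n → 𝕜) :
    (algebraMap ℝ (Matrix n n 𝕜) c - L) *ᵥ v = (c : 𝕜) • v - L *ᵥ v := by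
  rw [sub_mulVec, Algebra.algebraMap_eq_smul_one, smul_mulVec, one_mulVec,
    RCLike.real_smul_eq_coe_smul (K := 𝕜)]

theorem _root_.Matrix.re_dotProduct_algebraMap_sub_mulVec (v : n → 𝕜) :
    RCLike.re (star v ⬝ᵥ ((algebraMap ℝ (Matrix n n 𝕜) c - L) *ᵥ v))
      = c * RCLike.re (star v ⬝ᵥ v) - RCLike.re (star v ⬝ᵥ (L *ᵥ v)) := by
  rw [algebraMap_sub_mulVec, dotProduct_sub, dotProduct_smul, smul_eq_mul, map_sub,
    RCLike.re_ofReal_mul]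

theorem _root_.Matrix.IsHermitian.re_dotProduct_mulVec_le (hL : L.IsHermitian)
    (hc : ∀ i, hL.eigenvalues i ≤ c) (v : n → 𝕜) :
    RCLike.re (star v ⬝ᵥ (L *ᵥ v)) ≤ c * RCLike.re (star v ⬝ᵥ v) := by
  have := (hL.posSemidef_algebraMap_sub hc).re_dotProduct_nonneg v
  rw [re_dotProduct_algebraMap_sub_mulVec] at this
  linarith

theorem _root_.Matrix.IsHermitian.mulVec_eq_smul_iff_re_dotProduct_eq (hL : L.IsHermitian)
    (hc : ∀ i, hL.eigenvalues i ≤ c) (v : n → 𝕜) :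
    L *ᵥ v = (c : 𝕜) • v ↔ RCLike.re (star v ⬝ᵥ (L *ᵥ v)) = c * RCLike.re (star v ⬝ᵥ v) := by
  set N := algebraMap ℝ (Matrix n n 𝕜) c - L
  have hN : N.PosSemidef := hL.posSemidef_algebraMap_sub hc
  have him := (RCLike.nonneg_iff.mp (hN.dotProduct_mulVec_nonneg v)).2
  calc L *ᵥ v = (c : 𝕜) • v ↔ N *ᵥ v = 0 := by rw [algebraMap_sub_mulVec, sub_eq_zero, eq_comm]
    _ ↔ star v ⬝ᵥ (N *ᵥ v) = 0 := (hN.dotProduct_mulVec_zero_iff v).symm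
    _ ↔ RCLike.re (star v ⬝ᵥ (N *ᵥ v)) = 0 :=
      ⟨fun h => by rw [h, map_zero], fun h => RCLike.ext (by simpa using h) (by simpa using him)⟩
    _ ↔ _ := by rw [re_dotProduct_algebraMap_sub_mulVec, sub_eq_zero, eq_comm]

end

section

variable {dA dB r : ℕ}

theorem schmidtRankLE_iff_exists_mul {ψ : Fin dA × Fin dB → ℂ} :
    SchmidtRankLE r ψ ↔ ∃ (X : Matrix (Fin dA) (Fin r) ℂ) (Y : Matrix (Fin r) (Fin dB) ℂ),
      Matrix.of (Function.curry ψ) = X * Y := by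
  constructor
  · rintro ⟨x, y, rfl⟩
    refine ⟨Matrix.of fun i k => x k i, Matrix.of y, ?_⟩
    ext i j
    simp [Matrix.mul_apply, tensorVec, Finset.sum_apply]
  · rintro ⟨X, Y, h⟩
    refine ⟨X.transpose, Y, funext fun p => ?_⟩
    simpa [Matrix.mul_apply, tensorVec, Finset.sum_apply] using congr_fun (congr_fun h p.1) p.2

theorem schmidtRankLE_iff_rank_le {ψ : Fin dA × Fin dB → ℂ} :
    SchmidtRankLE r ψ ↔ (Matrix.of (Function.curry ψ)).rank ≤ r := by
  rw [schmidtRankLE_iff_exists_mul]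
  constructor
  · rintro ⟨X, Y, h⟩
    exact h ▸ (X.rank_mul_le_left Y).trans X.rank_le_width
  · exact Matrix.exists_eq_mul_of_rank_le

theorem SchmidtRankLE.mono {s : ℕ} {ψ : Fin dA × Fin dB → ℂ} (h : SchmidtRankLE r ψ)
    (hrs : r ≤ s) : SchmidtRankLE s ψ :=
  schmidtRankLE_iff_rank_le.2 ((schmidtRankLE_iff_rank_le.1 h).trans hrs)

theorem SchmidtRankLE.smul {ψ : Fin dA × Fin dB → ℂ} (h : SchmidtRankLE r ψ) (c : ℂ) :
    SchmidtRankLE r (c • ψ) := by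
  obtain ⟨X, Y, hXY⟩ := schmidtRankLE_iff_exists_mul.1 h
  refine schmidtRankLE_iff_exists_mul.2 ⟨c • X, Y, ?_⟩
  rw [Matrix.smul_mul, ← hXY]
  rfl

theorem schmidtRankLE_tensorVec (hr : 1 ≤ r) (x : Fin dA → ℂ) (y : Fin dB → ℂ) :
    SchmidtRankLE r (tensorVec x y) :=
  SchmidtRankLE.mono ⟨fun _ => x, fun _ => y, by simp⟩ hr

theorem isClosed_setOf_schmidtRankLE :
    IsClosed {ψ : Fin dA × Fin dB → ℂ | SchmidtRankLE r ψ} := by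
  simp_rw [schmidtRankLE_iff_rank_le]
  exact (Matrix.isClosed_setOf_rank_le r).preimage
    (continuous_pi fun i => continuous_pi fun j => continuous_apply (i, j))

theorem isUnitVec_iff_norm_eq_one {ψ : Fin dA × Fin dB → ℂ} :
    IsUnitVec ψ ↔ ‖WithLp.toLp 2 ψ‖ = 1 := by
  have h := inner_self_eq_norm_sq_to_K (𝕜 := ℂ) (WithLp.toLp 2 ψ)
  rw [EuclideanSpace.inner_eq_star_dotProduct, dotProduct_comm] at h
  rw [IsUnitVec, show dotProduct (star ψ) ψ = _ from h]
  norm_cast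
  exact Complex.ofReal_eq_one.trans <|
    pow_eq_one_iff_of_nonneg (norm_nonneg (WithLp.toLp 2 ψ)) two_ne_zero

theorem isCompact_setOf_isUnitVec :
    IsCompact {ψ : Fin dA × Fin dB → ℂ | IsUnitVec ψ} := by
  have h : {ψ : Fin dA × Fin dB → ℂ | IsUnitVec ψ}
      = WithLp.ofLp '' Metric.sphere (0 : EuclideanSpace ℂ (Fin dA × Fin dB)) 1 := by
    ext ψ
    rw [Set.mem_ofPred_eq, isUnitVec_iff_norm_eq_one]
    exact ⟨fun h => ⟨WithLp.toLp 2 ψ, by simpa using h, rfl⟩,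
      by rintro ⟨v, hv, rfl⟩; simpa using hv⟩
  rw [h]
  exact (isCompact_sphere 0 1).image (PiLp.continuous_ofLp 2 _)

theorem IsUnitVec.ne_zero {ψ : Fin dA × Fin dB → ℂ} (hψ : IsUnitVec ψ) : ψ ≠ 0 := by
  rintro rfl
  simp [IsUnitVec] at hψ

theorem exists_isUnitVec_smul {ψ : Fin dA × Fin dB → ℂ} (hψ : ψ ≠ 0) :
    ∃ c : ℂ, IsUnitVec (c • ψ) := by
  have hnorm : ‖WithLp.toLp 2 ψ‖ ≠ 0 := by simpa using hψ
  refine ⟨(‖WithLp.toLp 2 ψ‖⁻¹ : ℝ), isUnitVec_iff_norm_eq_one.2 ?_⟩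
  rw [WithLp.toLp_smul, norm_smul, Complex.norm_real, Real.norm_of_nonneg (by positivity),
    inv_mul_cancel₀ hnorm]

theorem exists_isUnitVec_schmidtRankLE (hr : 1 ≤ r) (p : Fin dA × Fin dB) :
    ∃ ψ : Fin dA × Fin dB → ℂ, IsUnitVec ψ ∧ SchmidtRankLE r ψ := by
  classical
  refine ⟨tensorVec (Pi.single p.1 1) (Pi.single p.2 1), ?_, schmidtRankLE_tensorVec hr _ _⟩
  simp [IsUnitVec, dotProduct, tensorVec, Fintype.sum_prod_type, Pi.single_apply]

theorem fr_eq_sSup_image (L : Matrix (Fin dA × Fin dB) (Fin dA × Fin dB) ℂ) :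
    fr r L = sSup ((fun ψ => (expVal L ψ).re) '' {ψ | IsUnitVec ψ ∧ SchmidtRankLE r ψ}) := by
  rw [fr]
  congr 1
  ext t
  simp [and_assoc]

theorem exists_expVal_re_eq_fr (hr : 1 ≤ r) (p : Fin dA × Fin dB)
    (L : Matrix (Fin dA × Fin dB) (Fin dA × Fin dB) ℂ) :
    ∃ ψ, IsUnitVec ψ ∧ SchmidtRankLE r ψ ∧ (expVal L ψ).re = fr r L := by
  have hK : IsCompact {ψ : Fin dA × Fin dB → ℂ | IsUnitVec ψ ∧ SchmidtRankLE r ψ} :=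
    isCompact_setOf_isUnitVec.inter_right isClosed_setOf_schmidtRankLE
  have hcont : Continuous fun ψ => (expVal L ψ).re := by
    unfold expVal
    fun_prop
  obtain ⟨ψ, hψ, hrank⟩ := exists_isUnitVec_schmidtRankLE hr p
  have hmax := (hK.image hcont).sSup_mem ⟨_, ψ, ⟨hψ, hrank⟩, rfl⟩
  rw [← fr_eq_sSup_image] at hmax
  obtain ⟨χ, ⟨hχ, hχr⟩, hval⟩ := hmax
  exact ⟨χ, hχ, hχr, hval⟩

variable {L : Matrix (Fin dA × Fin dB) (Fin dA × Fin dB) ℂ} {c : ℝ} {ψ : Fin dA × Fin dB → ℂ}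

theorem expVal_re_le (hL : L.IsHermitian) (hc : ∀ i, hL.eigenvalues i ≤ c) (hψ : IsUnitVec ψ) :
    (expVal L ψ).re ≤ c := by
  simpa [expVal, show dotProduct (star ψ) ψ = 1 from hψ] using hL.re_dotProduct_mulVec_le hc ψ

theorem mulVec_eq_smul_iff_expVal_re_eq (hL : L.IsHermitian) (hc : ∀ i, hL.eigenvalues i ≤ c)
    (hψ : IsUnitVec ψ) : L.mulVec ψ = (c : ℂ) • ψ ↔ (expVal L ψ).re = c := by
  simpa [expVal, show dotProduct (star ψ) ψ = 1 from hψ] using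
    hL.mulVec_eq_smul_iff_re_dotProduct_eq hc ψ

end

theorem fr_eq_lmax_iff_eigenspace_general (dA dB r : ℕ) (hr : 1 ≤ r)
    (L : Matrix (Fin dA × Fin dB) (Fin dA × Fin dB) ℂ) (hL : L.IsHermitian)
    (lmax : ℝ) (hlmax : IsGreatest (Set.range hL.eigenvalues) lmax) :
    fr r L = lmax ↔
      ∃ ψ : Fin dA × Fin dB → ℂ, ψ ≠ 0 ∧ SchmidtRankLE r ψ ∧
        L.mulVec ψ = ((lmax : ℝ) : ℂ) • ψ := by
  obtain ⟨p, -⟩ := hlmax.1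
  have hle : ∀ i, hL.eigenvalues i ≤ lmax := fun i => hlmax.2 ⟨i, rfl⟩
  constructor
  · intro hfr
    obtain ⟨ψ, hψ, hrank, hval⟩ := exists_expVal_re_eq_fr hr p L
    exact ⟨ψ, hψ.ne_zero, hrank, (mulVec_eq_smul_iff_expVal_re_eq hL hle hψ).2 (hval.trans hfr)⟩
  · rintro ⟨ψ, hψ, hrank, heig⟩
    obtain ⟨c, hunit⟩ := exists_isUnitVec_smul hψ
    have heig' : L.mulVec (c • ψ) = (lmax : ℂ) • c • ψ := by
      rw [Matrix.mulVec_smul, heig, smul_comm]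
    rw [fr_eq_sSup_image]
    refine IsGreatest.csSup_eq ⟨⟨c • ψ, ⟨hunit, hrank.smul c⟩, ?_⟩, ?_⟩
    · exact (mulVec_eq_smul_iff_expVal_re_eq hL hle hunit).1 heig'
    · rintro _ ⟨χ, ⟨hχ, -⟩, rfl⟩
      exact expVal_re_le hL hle hχ

/-- f_r(L) equals the largest eigenvalue of L if and only if the corresponding
eigenspace contains a nonzero vector of Schmidt rank at most r. -/
theorem fr_eq_lmax_iff_eigenspace (dA dB r : ℕ) (hA : 1 ≤ dA) (hB : 1 ≤ dB)
    (hr : 1 ≤ r) (hrd : r ≤ min dA dB)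
    (L : Matrix (Fin dA × Fin dB) (Fin dA × Fin dB) ℂ) (hL : L.IsHermitian)
    (lmax : ℝ) (hlmax : IsGreatest (Set.range hL.eigenvalues) lmax) :
    fr r L = lmax ↔
      ∃ ψ : Fin dA × Fin dB → ℂ, ψ ≠ 0 ∧ SchmidtRankLE r ψ ∧
        L.mulVec ψ = ((lmax : ℝ) : ℂ) • ψ :=
  fr_eq_lmax_iff_eigenspace_general dA dB r hr L hL lmax hlmax

end SNpaper
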